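/- arXiv:0706.3734 — 3 statements merged into one kernel-verified Lean document; each statement's English description precedes it below -/
import Mathlib

section
/- Assume additionally r ≡ 3 (mod 4), and let ρ ∈ F be an element with N(ρ) = −1. For each natural number a with 1 ≤ a ≤ (r−1)/2 define e⁻_a : F → ℂ by e⁻_a(z) = ∑_{j=0}^{r} (−1)^j·𝟙[z = u^j·a·ρ] (a viewed in F via the algebra map from ZMod r). Then Ŝ(e⁻_a) = ∑_{b=1}^{(r−1)/2} (∑_{j=0}^{r} (−1)^j·ζ^{−a·b·Tr(u^j)})·e⁻_b and T̂(e⁻_a) = ζ^{a²}·e⁻_a, where a·b and a² are computed in ZMod r. In particular the span of {e⁻_a : 1 ≤ a ≤ (r−1)/2} is invariant under Ŝ and T̂ (Lemma 3.2 of the paper). -/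
open Complex Finset

/-- For `n ∈ ZMod r`, the complex number `ζ^n = exp(2πi·n̂/r)` where `n̂` is the
canonical lift of `n`. -/
noncomputable def zmodExp (r : ℕ) (n : ZMod r) : ℂ :=
  Complex.exp (2 * Real.pi * Complex.I * (n.val : ℂ) / (r : ℂ))

/-- The S-matrix of the unfolded SL(2,ℤ)-representation:
`(Ŝf)(x) = ∑_{y ∈ F} ζ^{Tr(x^r·y)}·f(y)`. -/
noncomputable def Shat (r : ℕ) {F : Type*} [Field F] [Fintype F] [Algebra (ZMod r) F]
    (f : F → ℂ) : F → ℂ :=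
  fun x => ∑ y : F, zmodExp r (Algebra.trace (ZMod r) F (x ^ r * y)) * f y

/-- The T-matrix of the unfolded SL(2,ℤ)-representation: `(T̂f)(x) = ζ^{−N(x)}·f(x)`. -/
noncomputable def That (r : ℕ) {F : Type*} [Field F] [Fintype F] [Algebra (ZMod r) F]
    (f : F → ℂ) : F → ℂ :=
  fun x => zmodExp r (-(Algebra.norm (ZMod r) x)) * f x

/-- The alternating sum `s(m) = ∑_{j=0}^{r} (−1)^j·ζ^{m·Tr(u^j)}`. -/
noncomputable def sSum (r : ℕ) {F : Type*} [Field F] [Fintype F] [Algebra (ZMod r) F]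
    (u : F) (m : ZMod r) : ℂ :=
  ∑ j ∈ Finset.range (r + 1), (-1 : ℂ) ^ j * zmodExp r (m * Algebra.trace (ZMod r) F (u ^ j))

open scoped Classical

/-- The basis vector `e⁻_a(z) = ∑_{j=0}^{r} (−1)^j·𝟙[z = u^j·a·ρ]`. -/
noncomputable def eMinus (r : ℕ) {F : Type*} [Field F] [Fintype F] [Algebra (ZMod r) F]
    (u ρ : F) (a : ℕ) : F → ℂ :=
  fun z => ∑ j ∈ Finset.range (r + 1),
    (-1 : ℂ) ^ j * (if z = u ^ j * algebraMap (ZMod r) F (a : ZMod r) * ρ then 1 else 0)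

/-! The vectors `e⁻_b` are signed indicator functions of the orbits `u^ℤ·bρ` of the norm-one
group `⟨u⟩`; the orbit of `bρ` is the level set `N = -b²`, and `b ↦ b²` is injective on
`1 ≤ b ≤ (r-1)/2`. For `x = u^k·bρ` one has `x^r·aρ = -ab·u^{kr}` with `u^{kr} = u^{-k}`, so
shifting the summation index turns `(Ŝe⁻_a)(x)` into `(-1)^k` times the coefficient of `e⁻_b`.
Off these orbits `w = x^r·aρ` has non-square norm. Then `w^{r-1} = u^m` with `m` odd (Euler's
criterion), and the reflection `j ↦ m - j` modulo `r + 1` fixes `Tr(w u^j)` (up to Frobenius)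
but flips `(-1)^j`, so `(Ŝe⁻_a)(x) = 0`. `T̂` is diagonal because `N = -a²` on the support
of `e⁻_a`. -/

theorem ZMod.sum_range_natCast {M : Type*} [AddCommMonoid M] (n : ℕ) [NeZero n]
    (φ : ZMod n → M) : ∑ j ∈ range n, φ j = ∑ i, φ i :=
  Finset.sum_nbij' (↑) ZMod.val (by simp) (by simp [ZMod.val_lt])
    (fun j hj => ZMod.val_cast_of_lt (mem_range.mp hj)) (fun i _ => ZMod.natCast_zmod_val i)
    (fun _ _ => rfl)

theorem Function.Periodic.sum_range_add_mul {M : Type*} [AddCommMonoid M] {f : ℕ → M} {n : ℕ}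
    (hf : Function.Periodic f n) (b : ℕ) {a : ℕ} (ha : a.Coprime n) :
    ∑ j ∈ range n, f (b + a * j) = ∑ j ∈ range n, f j := by
  rcases eq_zero_or_neZero n with rfl | hn
  · simp
  let g : ZMod n → M := fun i => f i.val
  have hg : ∀ x : ℕ, g x = f x := fun x => by simp only [g, ZMod.val_natCast, hf.map_mod_nat]
  let e : ZMod n ≃ ZMod n :=
    (Units.mulLeft (ZMod.unitOfCoprime a ha)).trans (Equiv.addLeft (b : ZMod n))
  calc ∑ j ∈ range n, f (b + a * j) = ∑ j ∈ range n, g (e j) := by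
        refine sum_congr rfl fun j _ => ?_
        rw [← hg]
        simp [e]
    _ = ∑ i, g (e i) := ZMod.sum_range_natCast n fun i => g (e i)
    _ = ∑ i, g i := e.sum_comp g
    _ = ∑ j ∈ range n, g j := (ZMod.sum_range_natCast n g).symm
    _ = ∑ j ∈ range n, f j := sum_congr rfl fun j _ => hg j

theorem sum_range_neg_one_pow_mul_pow_add_mul {G R : Type*} [Monoid G] [CommRing R] {u : G}
    {n : ℕ} (hn : Even n) (hu : u ^ n = 1) (h : G → R) (b : ℕ) {a : ℕ} (ha : a.Coprime n) :
    ∑ j ∈ range n, (-1) ^ j * h (u ^ (b + a * j)) =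
      (-1) ^ b * ∑ j ∈ range n, (-1) ^ j * h (u ^ j) := by
  have hf : Function.Periodic (fun j => (-1 : R) ^ j * h (u ^ j)) n := fun j => by
    simp only [pow_add, hn.neg_one_pow, hu, mul_one]
  have ha_odd : Odd a := Nat.coprime_two_right.mp (ha.coprime_dvd_right hn.two_dvd)
  rw [← hf.sum_range_add_mul b ha, mul_sum]
  refine sum_congr rfl fun j _ => ?_
  rw [← mul_assoc, ← pow_add, ← add_assoc, pow_add (-1 : R) (b + b),
    (Even.add_self b).neg_one_pow, one_mul, pow_mul, ha_odd.neg_one_pow]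

theorem ZMod.exists_mem_Icc_sq_eq {n : ℕ} [NeZero n] {c : ZMod n} (hc : c ≠ 0) :
    ∃ b ∈ Icc 1 (n / 2), (b : ZMod n) ^ 2 = c ^ 2 := by
  refine ⟨c.valMinAbs.natAbs, mem_Icc.2 ⟨?_, c.natAbs_valMinAbs_le⟩, ?_⟩
  · simpa [Nat.one_le_iff_ne_zero] using hc
  · rw [natCast_natAbs_valMinAbs]
    split_ifs <;> simp

theorem ZMod.eq_of_sq_eq_sq_of_le_half {p : ℕ} [Fact p.Prime] {b b' : ℕ} (hb : b ≤ p / 2)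
    (hb' : b' ≤ p / 2) (h : (b : ZMod p) ^ 2 = (b' : ZMod p) ^ 2) : b = b' := by
  have := natAbs_valMinAbs_eq_natAbs_valMinAbs.mpr (sq_eq_sq_iff_eq_or_eq_neg.mp h)
  rwa [valMinAbs_natCast_of_le_half hb, valMinAbs_natCast_of_le_half hb', Int.natAbs_natCast,
    Int.natAbs_natCast] at this

section QuadraticExtension

variable {r : ℕ} {F : Type*} [Field F] [Fintype F] [Algebra (ZMod r) F] {u ρ : F}

theorem Shat_eMinus_apply (a : ℕ) (x : F) :
    Shat r (eMinus r u ρ a) x = ∑ j ∈ range (r + 1), (-1 : ℂ) ^ j *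
      zmodExp r (Algebra.trace (ZMod r) F (x ^ r * algebraMap (ZMod r) F a * ρ * u ^ j)) := by
  simp only [Shat, eMinus, mul_sum]
  rw [sum_comm]
  refine sum_congr rfl fun j _ => ?_
  simp only [mul_ite, mul_one, mul_zero, sum_ite_eq', mem_univ, if_true]
  rw [mul_comm]
  congr 3
  ring

variable [Fact r.Prime]

theorem trace_pow_char (x : F) :
    Algebra.trace (ZMod r) F (x ^ r) = Algebra.trace (ZMod r) F x := by
  simpa [FiniteField.coe_frobeniusAlgEquivOfAlgebraic, ZMod.card] using
    Algebra.trace_eq_of_algEquiv (FiniteField.frobeniusAlgEquivOfAlgebraic (ZMod r) F) x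

theorem norm_algebraMap_of_card_eq_sq (hF : Fintype.card F = r ^ 2) (c : ZMod r) :
    Algebra.norm (ZMod r) (algebraMap (ZMod r) F c) = c ^ 2 := by
  have h := Module.card_eq_pow_finrank (K := ZMod r) (V := F)
  rw [hF, ZMod.card] at h
  rw [Algebra.norm_algebraMap, ← Nat.pow_right_injective (Fact.out : r.Prime).two_le h]

theorem algebraMap_norm_of_card_eq_sq (hF : Fintype.card F = r ^ 2) (x : F) :
    algebraMap (ZMod r) F (Algebra.norm (ZMod r) x) = x ^ (r + 1) := by
  have hr : 0 < r - 1 := Nat.sub_pos_of_lt (Fact.out : r.Prime).one_lt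
  rw [FiniteField.algebraMap_norm_eq_pow, Nat.card_eq_fintype_card, hF, Nat.card_zmod,
    show r ^ 2 - 1 = (r + 1) * (r - 1) by simpa using Nat.sq_sub_sq r 1, Nat.mul_div_cancel _ hr]

theorem norm_pow_mul_algebraMap_mul (hF : Fintype.card F = r ^ 2) (hu : u ^ (r + 1) = 1)
    (hρ : Algebra.norm (ZMod r) ρ = -1) (k : ℕ) (c : ZMod r) :
    Algebra.norm (ZMod r) (u ^ k * algebraMap (ZMod r) F c * ρ) = -c ^ 2 := by
  have hNu : Algebra.norm (ZMod r) u = 1 :=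
    (algebraMap (ZMod r) F).injective (by rw [algebraMap_norm_of_card_eq_sq hF, hu, map_one])
  rw [map_mul, map_mul, map_pow, hNu, one_pow, one_mul, norm_algebraMap_of_card_eq_sq hF, hρ,
    mul_neg_one]

theorem exists_pow_mul_eq_of_norm_eq (hF : Fintype.card F = r ^ 2)
    (hu : IsPrimitiveRoot u (r + 1)) {x y : F} (hy : y ≠ 0)
    (hxy : Algebra.norm (ZMod r) x = Algebra.norm (ZMod r) y) : ∃ k < r + 1, x = u ^ k * y := by
  have hquot : (x / y) ^ (r + 1) = 1 := by
    rw [div_pow, ← algebraMap_norm_of_card_eq_sq hF, ← algebraMap_norm_of_card_eq_sq hF, hxy,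
      algebraMap_norm_of_card_eq_sq hF, div_self (pow_ne_zero _ hy)]
  obtain ⟨k, hk, hk'⟩ := hu.eq_pow_of_pow_eq_one hquot
  exact ⟨k, hk, by rw [hk', div_mul_cancel₀ x hy]⟩

theorem exists_mem_Icc_eq_pow_mul_mul (hF : Fintype.card F = r ^ 2)
    (hu : IsPrimitiveRoot u (r + 1)) (hρ : Algebra.norm (ZMod r) ρ = -1) {x : F} {c : ZMod r}
    (hc : c ≠ 0) (hx : Algebra.norm (ZMod r) x = -c ^ 2) :
    ∃ b ∈ Icc 1 (r / 2), ∃ k < r + 1, x = u ^ k * algebraMap (ZMod r) F b * ρ := by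
  obtain ⟨b, hb, hbc⟩ := ZMod.exists_mem_Icc_sq_eq hc
  have hρ0 : ρ ≠ 0 := (Algebra.norm_ne_zero_iff (R := ZMod r)).mp (by simp [hρ])
  have hb0 : algebraMap (ZMod r) F b * ρ ≠ 0 :=
    mul_ne_zero ((map_ne_zero _).2 fun h => hc (by simpa [h] using hbc.symm)) hρ0
  obtain ⟨k, hk, rfl⟩ := exists_pow_mul_eq_of_norm_eq hF hu hb0 (by
    rw [hx, map_mul, norm_algebraMap_of_card_eq_sq hF, hρ, hbc, mul_neg_one])
  exact ⟨b, hb, k, hk, (mul_assoc _ _ _).symm⟩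

theorem odd_of_pow_eq_pow_pred (hodd : Odd r) (hF : Fintype.card F = r ^ 2)
    (hu : IsPrimitiveRoot u (r + 1)) {w : F} (hw : ¬IsSquare (Algebra.norm (ZMod r) w)) {m : ℕ}
    (hm : u ^ m = w ^ (r - 1)) : Odd m := by
  have : Fact (2 < r) :=
    ⟨by have := (Fact.out : r.Prime).two_le; have := Nat.odd_iff.mp hodd; omega⟩
  have hNw : Algebra.norm (ZMod r) w ≠ 0 := fun h => hw (h ▸ IsSquare.zero)
  have hLegendre : Algebra.norm (ZMod r) w ^ (r / 2) = -1 :=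
    (ZMod.pow_div_two_eq_neg_one_or_one r hNw).resolve_left
      fun h => hw ((ZMod.euler_criterion r hNw).2 h)
  have hhalf : u ^ ((r + 1) / 2) = -1 :=
    (hu.pow r.succ_pos (Nat.div_mul_cancel (even_iff_two_dvd.mp hodd.add_one)).symm
      ).eq_neg_one_of_two_right
  have hexp : (r - 1) * ((r + 1) / 2) = (r + 1) * (r / 2) := by
    obtain ⟨t, rfl⟩ := hodd
    rw [show 2 * t + 1 - 1 = 2 * t by omega, show (2 * t + 1 + 1) / 2 = t + 1 by omega,
      show (2 * t + 1) / 2 = t by omega]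
    ring
  have hne : (-1 : F) ≠ 1 := fun h =>
    ZMod.neg_one_ne_one (n := r) ((algebraMap (ZMod r) F).injective (by simpa using h))
  refine (neg_one_pow_eq_neg_one_iff_odd hne).mp ?_
  calc (-1 : F) ^ m = (u ^ m) ^ ((r + 1) / 2) := by rw [← hhalf, ← pow_mul, ← pow_mul, mul_comm]
    _ = (w ^ (r + 1)) ^ (r / 2) := by rw [hm, ← pow_mul, ← pow_mul, hexp]
    _ = algebraMap (ZMod r) F (Algebra.norm (ZMod r) w ^ (r / 2)) := by
        rw [map_pow, algebraMap_norm_of_card_eq_sq hF]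
    _ = -1 := by rw [hLegendre, map_neg, map_one]

theorem sum_neg_one_pow_mul_zmodExp_trace_eq_zero (hodd : Odd r) (hF : Fintype.card F = r ^ 2)
    (hu : IsPrimitiveRoot u (r + 1)) {w : F}
    (hw : ¬∃ c ≠ 0, Algebra.norm (ZMod r) w = c ^ 2) :
    ∑ j ∈ range (r + 1), (-1 : ℂ) ^ j * zmodExp r (Algebra.trace (ZMod r) F (w * u ^ j)) = 0 := by
  have hn : Even (r + 1) := hodd.add_one
  rcases eq_or_ne w 0 with rfl | hw0
  · simp [zmodExp, neg_one_geom_sum, hn]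
  have hsq : ¬IsSquare (Algebra.norm (ZMod r) w) := by
    rintro ⟨c, hc⟩
    refine hw ⟨c, ?_, by rw [hc, sq]⟩
    rintro rfl
    exact hw0 (by simpa using hc)
  obtain ⟨m, -, hm⟩ := hu.eq_pow_of_pow_eq_one (ξ := w ^ (r - 1)) (by
    rw [← pow_mul, show (r - 1) * (r + 1) = Fintype.card F - 1 by
      rw [hF, mul_comm]; simpa using (Nat.sq_sub_sq r 1).symm,
      FiniteField.pow_card_sub_one_eq_one w hw0])
  -- `u ^ (r * j) = u ^ (-j)`: `j ↦ m + r * j` is the reflection `j ↦ m - j` modulo `r + 1`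
  have hsymm : ∀ j, Algebra.trace (ZMod r) F (w * u ^ (m + r * j)) =
      Algebra.trace (ZMod r) F (w * u ^ j) := fun j => by
    rw [pow_add, pow_mul', hm, ← mul_assoc, ← pow_succ',
      Nat.sub_add_cancel (Fact.out : r.Prime).one_le, ← mul_pow, trace_pow_char]
  have := sum_range_neg_one_pow_mul_pow_add_mul hn hu.pow_eq_one
    (fun y => zmodExp r (Algebra.trace (ZMod r) F (w * y))) m
    (Nat.coprime_self_add_right.2 (Nat.coprime_one_right r))
  simp only [hsymm, (odd_of_pow_eq_pow_pred hodd hF hu hsq hm).neg_one_pow,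
    neg_one_mul] at this
  exact self_eq_neg.mp this

theorem eMinus_apply_eq_zero_of_norm_ne (hF : Fintype.card F = r ^ 2) (hu : u ^ (r + 1) = 1)
    (hρ : Algebra.norm (ZMod r) ρ = -1) {b : ℕ} {x : F}
    (hx : Algebra.norm (ZMod r) x ≠ -(b : ZMod r) ^ 2) : eMinus r u ρ b x = 0 :=
  sum_eq_zero fun j _ => by
    rw [if_neg fun h => hx (by rw [h, norm_pow_mul_algebraMap_mul hF hu hρ]), mul_zero]

theorem eMinus_apply_pow_mul_self (hu : IsPrimitiveRoot u (r + 1)) (hρ0 : ρ ≠ 0) {b : ℕ}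
    (hb : (b : ZMod r) ≠ 0) {k : ℕ} (hk : k < r + 1) :
    eMinus r u ρ b (u ^ k * algebraMap (ZMod r) F b * ρ) = (-1) ^ k := by
  have hb' : algebraMap (ZMod r) F b ≠ 0 := (map_ne_zero _).2 hb
  rw [eMinus, sum_eq_single_of_mem k (mem_range.2 hk) fun j hj hjk => ?_, if_pos rfl, mul_one]
  rw [if_neg fun h => hjk (hu.pow_inj (mem_range.1 hj) hk ?_), mul_zero]
  exact (mul_right_cancel₀ hb' (mul_right_cancel₀ hρ0 h)).symm

theorem sum_zmodExp_trace_pow_mul_mul (hodd : Odd r) (hF : Fintype.card F = r ^ 2)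
    (hu : u ^ (r + 1) = 1) (hρ : Algebra.norm (ZMod r) ρ = -1) (a b k : ℕ) :
    ∑ j ∈ range (r + 1), (-1 : ℂ) ^ j * zmodExp r (Algebra.trace (ZMod r) F
        ((u ^ k * algebraMap (ZMod r) F b * ρ) ^ r * algebraMap (ZMod r) F a * ρ * u ^ j)) =
      (-1) ^ k * ∑ j ∈ range (r + 1), (-1 : ℂ) ^ j *
        zmodExp r (-((a : ZMod r) * b * Algebra.trace (ZMod r) F (u ^ j))) := by
  have hρ' : ρ ^ (r + 1) = -1 := by
    rw [← algebraMap_norm_of_card_eq_sq hF, hρ, map_neg, map_one]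
  have hb : algebraMap (ZMod r) F b ^ r = algebraMap (ZMod r) F b := by
    rw [← map_pow, ZMod.pow_card]
  have hterm : ∀ j,
      (u ^ k * algebraMap (ZMod r) F b * ρ) ^ r * algebraMap (ZMod r) F a * ρ * u ^ j =
        algebraMap (ZMod r) F (-(a * b)) * u ^ (k * r + 1 * j) := fun j => by
    rw [mul_pow, mul_pow, hb, ← pow_mul, map_neg, map_mul, one_mul, pow_add]
    linear_combination
      (algebraMap (ZMod r) F a * algebraMap (ZMod r) F b * u ^ (k * r) * u ^ j) * hρ'
  simp only [hterm, ← Algebra.smul_def, map_smul, smul_eq_mul, neg_mul]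
  rw [sum_range_neg_one_pow_mul_pow_add_mul hodd.add_one hu
      (fun y => zmodExp r (-((a : ZMod r) * b * Algebra.trace (ZMod r) F y))) (k * r)
      (Nat.coprime_one_left _),
    mul_comm k r, pow_mul, hodd.neg_one_pow]

theorem That_eMinus (hF : Fintype.card F = r ^ 2) (hu : u ^ (r + 1) = 1)
    (hρ : Algebra.norm (ZMod r) ρ = -1) (a : ℕ) :
    That r (eMinus r u ρ a) = fun z => zmodExp r ((a : ZMod r) ^ 2) * eMinus r u ρ a z := by
  funext x
  by_cases hx : Algebra.norm (ZMod r) x = -(a : ZMod r) ^ 2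
  · rw [That, hx, neg_neg]
  · rw [That, eMinus_apply_eq_zero_of_norm_ne hF hu hρ hx, mul_zero, mul_zero]

theorem Shat_eMinus (hodd : Odd r) (hF : Fintype.card F = r ^ 2)
    (hu : IsPrimitiveRoot u (r + 1)) (hρ : Algebra.norm (ZMod r) ρ = -1) (a : ℕ) :
    Shat r (eMinus r u ρ a) = fun z => ∑ b ∈ Icc 1 (r / 2),
      (∑ j ∈ range (r + 1), (-1 : ℂ) ^ j *
        zmodExp r (-((a : ZMod r) * (b : ZMod r) * Algebra.trace (ZMod r) F (u ^ j)))) *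
        eMinus r u ρ b z := by
  funext x
  rw [Shat_eMinus_apply]
  by_cases hx : ∃ b ∈ Icc 1 (r / 2), ∃ k < r + 1, x = u ^ k * algebraMap (ZMod r) F b * ρ
  · obtain ⟨b, hb, k, hk, rfl⟩ := hx
    have hb0 : (b : ZMod r) ≠ 0 := by
      rw [Ne, ZMod.natCast_eq_zero_iff]
      exact Nat.not_dvd_of_pos_of_lt (mem_Icc.1 hb).1
        ((mem_Icc.1 hb).2.trans_lt (Nat.div_lt_self (Fact.out : r.Prime).pos one_lt_two))
    have hρ0 : ρ ≠ 0 := (Algebra.norm_ne_zero_iff (R := ZMod r)).mp (by simp [hρ])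
    rw [sum_zmodExp_trace_pow_mul_mul hodd hF hu.pow_eq_one hρ, sum_eq_single_of_mem b hb,
      eMinus_apply_pow_mul_self hu hρ0 hb0 hk, mul_comm]
    intro b' hb' hne
    rw [eMinus_apply_eq_zero_of_norm_ne hF hu.pow_eq_one hρ, mul_zero]
    rw [norm_pow_mul_algebraMap_mul hF hu.pow_eq_one hρ, ne_eq, neg_inj]
    exact fun h => hne (ZMod.eq_of_sq_eq_sq_of_le_half (mem_Icc.1 hb').2 (mem_Icc.1 hb).2 h.symm)
  · have he : ∀ b ∈ Icc 1 (r / 2), eMinus r u ρ b x = 0 := fun b hb =>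
      sum_eq_zero fun j hj => by rw [if_neg fun h => hx ⟨b, hb, j, mem_range.1 hj, h⟩, mul_zero]
    rw [sum_eq_zero (s := Icc 1 (r / 2)) fun b hb => by rw [he b hb, mul_zero]]
    refine sum_neg_one_pow_mul_zmodExp_trace_eq_zero hodd hF hu ?_
    rintro ⟨c, hc, hN⟩
    rw [map_mul, map_mul, map_pow, ZMod.pow_card, norm_algebraMap_of_card_eq_sq hF, hρ] at hN
    have ha : (a : ZMod r) ≠ 0 := fun ha => hc (by simpa [ha] using hN.symm)
    refine hx (exists_mem_Icc_eq_pow_mul_mul hF hu hρ (div_ne_zero hc ha) ?_)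
    field_simp
    linear_combination -hN

end QuadraticExtension

theorem stmt3_general (r : ℕ) (hr : r.Prime) (hodd : Odd r)
    (F : Type*) [Field F] [Fintype F] [Algebra (ZMod r) F]
    (hcard : Fintype.card F = r ^ 2)
    (u : F) (hu : orderOf u = r + 1)
    (ρ : F) (hρ : Algebra.norm (ZMod r) ρ = -1)
    (a : ℕ) :
    Shat r (eMinus r u ρ a) =
      (fun z => ∑ b ∈ Finset.Icc 1 ((r - 1) / 2),
        (∑ j ∈ Finset.range (r + 1),
          (-1 : ℂ) ^ j *
            zmodExp r (-((a : ZMod r) * (b : ZMod r) * Algebra.trace (ZMod r) F (u ^ j)))) *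
          eMinus r u ρ b z) ∧
    That r (eMinus r u ρ a) = (fun z => zmodExp r ((a : ZMod r) ^ 2) * eMinus r u ρ a z) := by
  have : Fact r.Prime := ⟨hr⟩
  have hu' : IsPrimitiveRoot u (r + 1) := hu ▸ IsPrimitiveRoot.orderOf u
  have hhalf : (r - 1) / 2 = r / 2 := by have := Nat.odd_iff.mp hodd; omega
  exact ⟨hhalf ▸ Shat_eMinus hodd hcard hu' hρ a, That_eMinus hcard hu'.pow_eq_one hρ a⟩

/-- Lemma 3.2: for `r ≡ 3 (mod 4)` and `ρ` of norm `−1`,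
`Ŝ(e⁻_a) = ∑_b (∑_j (−1)^j ζ^{−ab·Tr(u^j)})·e⁻_b` and `T̂(e⁻_a) = ζ^{a²}·e⁻_a`. -/
theorem stmt3 (r : ℕ) (hr : r.Prime) (hodd : Odd r) (h3 : r % 3 = 2) (h4 : r % 4 = 3)
    (F : Type*) [Field F] [Fintype F] [Algebra (ZMod r) F]
    (hcard : Fintype.card F = r ^ 2)
    (u : F) (hu : orderOf u = r + 1)
    (ρ : F) (hρ : Algebra.norm (ZMod r) ρ = -1)
    (a : ℕ) (ha1 : 1 ≤ a) (ha2 : a ≤ (r - 1) / 2) :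
    Shat r (eMinus r u ρ a) =
      (fun z => ∑ b ∈ Finset.Icc 1 ((r - 1) / 2),
        (∑ j ∈ Finset.range (r + 1),
          (-1 : ℂ) ^ j *
            zmodExp r (-((a : ZMod r) * (b : ZMod r) * Algebra.trace (ZMod r) F (u ^ j)))) *
          eMinus r u ρ b z) ∧
    That r (eMinus r u ρ a) = (fun z => zmodExp r ((a : ZMod r) ^ 2) * eMinus r u ρ a z) :=
  stmt3_general r hr hodd F hcard u hu ρ hρ a
end

section
/- Equation (s) of the paper: if r ≡ 1 (mod 4) then s(1) = ζ^{−2} · ∑_{a ∈ ZMod r, a ≠ 0} ζ^{3·(a²+a+1)⁻¹} − ζ^{−2} · ∑_{a ∈ ZMod r, a ≠ 0} ζ^{3·((2a+1)·(a²+a+1)⁻¹)²}, while if r ≡ 3 (mod 4) then s(1) equals the negative of this expression; exponents are computed in ZMod r (a² + a + 1 ≠ 0 for all a since r ≡ 2 (mod 3)). -/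
open Complex Finset

open scoped Classical

/-! Let `C = {w : w ^ (r + 1) = 1}` be the norm-one circle of `F = 𝔽_{r²}` and `ω ∈ F` a primitive
cube root of unity; as `r ≡ 2 (mod 3)`, `ω ∉ 𝔽_r` and `ω ^ r = ω²`. The map
`a ↦ -(a + 1 + ω) / (a - ω)` is a bijection from `𝔽_r` onto `C \ {-1}`, with `a² + a + 1` and
`2a + 1` the norm and trace of `a - ω`; this gives `Tr w = -2 + 3 / (a² + a + 1)` and
`Tr (-w²) = Tr w ^ 2 - 2 = -2 + 3 ((2a + 1) / (a² + a + 1))²`. Hence the right-hand side is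
`∑_{w ∈ C} (ζ^{Tr w} - ζ^{Tr (-w²)})`, the points `a = 0` and `w = -1` contributing nothing.
Writing `w = u ^ j` and `-1 = u ^ n` with `r + 1 = 2n`, the second sum runs twice over the powers
`u ^ j` with `j ≡ n (mod 2)`, so the difference is `s(1)` or `-s(1)` according to the parity
of `n`. -/

open Polynomial (nthRootsFinset)

theorem zmodExp_eq_stdAddChar (r : ℕ) [NeZero r] (n : ZMod r) :
    zmodExp r n = ZMod.stdAddChar n := by
  rw [ZMod.stdAddChar_apply, ZMod.toCircle_apply, zmodExp]

theorem Finset.sum_range_two_mul {M : Type*} [AddCommMonoid M] (f : ℕ → M) (n : ℕ) :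
    ∑ j ∈ range (2 * n), f j = ∑ k ∈ range n, (f (2 * k) + f (2 * k + 1)) := by
  induction n with
  | zero => simp
  | succ n ih => rw [Nat.mul_succ, sum_range_succ, sum_range_succ, sum_range_succ, ih, add_assoc]

theorem Function.Periodic.sum_range_add_right {M : Type*} [AddCancelCommMonoid M] {f : ℕ → M}
    {n : ℕ} (hf : Periodic f n) (m : ℕ) :
    ∑ k ∈ range n, f (k + m) = ∑ k ∈ range n, f k := by
  induction m with
  | zero => simp
  | succ m ih =>
    have h := (sum_range_succ' (fun k => f (k + m)) n).symm.trans
      (sum_range_succ (fun k => f (k + m)) n)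
    rw [zero_add, add_comm n m, hf m, add_left_inj, ih] at h
    simpa only [add_right_comm _ 1 m, add_assoc] using h

/-- Modulo `2n`, the map `j ↦ 2j + n` covers each residue of the parity of `n` twice. -/
theorem Function.Periodic.sum_range_two_mul_add {M : Type*} [CommRing M] {g : ℕ → M} {n : ℕ}
    (hg : Periodic g (2 * n)) :
    ∑ j ∈ range (2 * n), g (2 * j + n) =
      ∑ j ∈ range (2 * n), g j + (-1) ^ n * ∑ j ∈ range (2 * n), (-1) ^ j * g j := by
  have hhalf : ∑ j ∈ range (2 * n), g (2 * j + n) =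
      2 * ∑ k ∈ range n, g (2 * k + n) := by
    rw [two_mul n, sum_range_add, two_mul]
    refine congrArg _ (sum_congr rfl fun k _ => ?_)
    rw [show 2 * (n + k) + n = 2 * k + n + 2 * n by ring, hg]
  have hshift (c t : ℕ) :
      ∑ k ∈ range n, g (2 * k + (2 * t + c)) = ∑ k ∈ range n, g (2 * k + c) := by
    have hper : Function.Periodic (fun k => g (2 * k + c)) n := fun k => by
      dsimp only
      rw [show 2 * (k + n) + c = 2 * k + c + 2 * n by ring, hg]
    simpa only [mul_add, add_assoc] using hper.sum_range_add_right t
  rw [hhalf, sum_range_two_mul, sum_range_two_mul]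
  obtain ⟨t, ht | ht⟩ := Nat.even_or_odd' n
  · have hsign : (-1 : M) ^ n = 1 := by rw [ht, pow_mul]; norm_num
    have heven := hshift 0 t
    simp only [add_zero, ← ht] at heven
    rw [hsign, heven, mul_sum, mul_sum, ← sum_add_distrib]
    refine sum_congr rfl fun k _ => ?_
    simp only [pow_succ, pow_mul]
    ring
  · have hsign : (-1 : M) ^ n = -1 := by rw [ht, pow_succ, pow_mul]; norm_num
    have hodd := hshift 1 t
    rw [← ht] at hodd
    rw [hsign, hodd, mul_sum, mul_sum, ← sum_add_distrib]
    refine sum_congr rfl fun k _ => ?_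
    simp only [pow_succ, pow_mul]
    ring

theorem card_nthRootsFinset_le {R : Type*} [CommRing R] [IsDomain R] (n : ℕ) (a : R) :
    (nthRootsFinset n a).card ≤ n := by
  classical
  rw [Polynomial.nthRootsFinset_def]
  exact (Multiset.toFinset_card_le _).trans (Polynomial.card_nthRoots n a)

theorem IsPrimitiveRoot.sq_add_self_add_one {R : Type*} [CommRing R] [IsDomain R] {ω : R}
    (hω : IsPrimitiveRoot ω 3) : ω ^ 2 + ω + 1 = 0 := by
  have h := hω.geom_sum_eq_zero (by norm_num)
  simp only [sum_range_succ, sum_range_zero, pow_zero, pow_one, zero_add] at h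
  linear_combination h

theorem IsPrimitiveRoot.pow_eq_sq_of_mod_three {R : Type*} [CommMonoid R] {ω : R}
    (hω : IsPrimitiveRoot ω 3) {n : ℕ} (hn : n % 3 = 2) : ω ^ n = ω ^ 2 := by
  rw [← Nat.mod_add_div n 3, pow_add, pow_mul, hω.pow_eq_one, one_pow, mul_one, hn]

theorem algebraMap_sq_add_self_add_one {K F : Type*} [CommRing K] [CommRing F] [IsDomain F]
    [Algebra K F] {ω : F} (hω : IsPrimitiveRoot ω 3) (a : K) :
    algebraMap K F (a ^ 2 + a + 1) = (algebraMap K F a - ω) * (algebraMap K F a + 1 + ω) := by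
  simp only [map_add, map_pow, map_one]
  linear_combination hω.sq_add_self_add_one

theorem IsPrimitiveRoot.sum_nthRootsFinset_one {R M : Type*} [CommRing R] [IsDomain R]
    [AddCommMonoid M] {u : R} {n : ℕ} (hu : IsPrimitiveRoot u n) (G : R → M) :
    ∑ w ∈ nthRootsFinset n (1 : R), G w = ∑ j ∈ range n, G (u ^ j) := by
  classical
  rcases n.eq_zero_or_pos with rfl | hn
  · simp
  have himage : (range n).image (u ^ ·) = nthRootsFinset n (1 : R) := by
    refine eq_of_subset_of_card_le (fun w hw => ?_) ?_
    · obtain ⟨j, -, rfl⟩ := mem_image.mp hw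
      rw [Polynomial.mem_nthRootsFinset hn, ← pow_mul, mul_comm, pow_mul, hu.pow_eq_one, one_pow]
    · rw [hu.card_nthRootsFinset, card_image_of_injOn hu.injOn_pow, card_range]
  rw [← himage, sum_image hu.injOn_pow]

theorem pow_pow_of_card_eq_sq {F : Type*} [Field F] [Fintype F] {q : ℕ}
    (hF : Fintype.card F = q ^ 2) (x : F) : (x ^ q) ^ q = x := by
  rw [← pow_mul, ← sq, ← hF, FiniteField.pow_card]

theorem exists_isPrimitiveRoot_three {F : Type*} [Field F] [Fintype F] {q : ℕ}
    (hF : Fintype.card F = q ^ 2) (hq : q % 3 = 2) : ∃ ω : F, IsPrimitiveRoot ω 3 := by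
  have h3 : 3 ∣ Nat.card Fˣ := by
    rw [Nat.card_eq_fintype_card, Fintype.card_units, hF]
    refine (Nat.modEq_iff_dvd' (Nat.one_le_pow _ _ (by omega))).mp ?_
    rw [Nat.ModEq, Nat.pow_mod, hq]
  obtain ⟨g, hg⟩ := exists_prime_orderOf_dvd_card' (hp := ⟨Nat.prime_three⟩) 3 h3
  exact ⟨g, IsPrimitiveRoot.coe_units_iff.mpr (hg ▸ IsPrimitiveRoot.orderOf g)⟩

section QuadraticExtension

variable {K F : Type*} [Field K] [Fintype K] [Field F] [Algebra K F]

theorem finrank_eq_two_of_card_eq_sq [Fintype F] (hF : Fintype.card F = Fintype.card K ^ 2) :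
    Module.finrank K F = 2 := by
  rw [Module.card_eq_pow_finrank (K := K) (V := F)] at hF
  exact Nat.pow_right_injective Fintype.one_lt_card hF

theorem algebraMap_trace_eq_add_pow_card [Fintype F] (hF : Fintype.card F = Fintype.card K ^ 2)
    (x : F) :
    algebraMap K F (Algebra.trace K F x) = x + x ^ Fintype.card K := by
  rw [FiniteField.algebraMap_trace_eq_sum_pow, finrank_eq_two_of_card_eq_sq hF,
    Nat.card_eq_fintype_card]
  simp [sum_range_succ]

theorem trace_sq_of_pow_card_add_one_eq_one [Fintype F] (hF : Fintype.card F = Fintype.card K ^ 2)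
    {w : F} (hw : w ^ (Fintype.card K + 1) = 1) :
    Algebra.trace K F (w ^ 2) = Algebra.trace K F w ^ 2 - 2 := by
  apply (algebraMap K F).injective
  rw [map_sub, map_pow (algebraMap K F), map_ofNat, algebraMap_trace_eq_add_pow_card hF,
    algebraMap_trace_eq_add_pow_card hF, pow_right_comm]
  linear_combination (-2 : F) * hw

theorem algebraMap_ne_of_isPrimitiveRoot_three (hq : Fintype.card K % 3 = 2) {ω : F}
    (hω : IsPrimitiveRoot ω 3) (c : K) : algebraMap K F c ≠ ω := by
  rintro rfl
  have h : algebraMap K F c ^ Fintype.card K = algebraMap K F c := by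
    rw [← map_pow, FiniteField.pow_card]
  rw [hω.pow_eq_sq_of_mod_three hq, sq] at h
  exact hω.ne_one (by norm_num)
    (mul_left_cancel₀ (hω.ne_zero (by norm_num)) (h.trans (mul_one _).symm))

variable {ω : F}

theorem pow_card_algebraMap_sub (hq : Fintype.card K % 3 = 2) (hω : IsPrimitiveRoot ω 3) (a : K) :
    (algebraMap K F a - ω) ^ Fintype.card K = algebraMap K F a + 1 + ω := by
  have h := map_sub (FiniteField.frobeniusAlgHom K F) (algebraMap K F a) ω
  simp only [AlgHom.commutes, FiniteField.frobeniusAlgHom_apply] at h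
  rw [h, hω.pow_eq_sq_of_mod_three hq]
  linear_combination -hω.sq_add_self_add_one

theorem algebraMap_sub_ne_zero_of_isPrimitiveRoot_three (hq : Fintype.card K % 3 = 2)
    (hω : IsPrimitiveRoot ω 3) (a : K) : algebraMap K F a - ω ≠ 0 :=
  sub_ne_zero.mpr (algebraMap_ne_of_isPrimitiveRoot_three hq hω a)

theorem algebraMap_add_one_add_ne_zero_of_isPrimitiveRoot_three (hq : Fintype.card K % 3 = 2)
    (hω : IsPrimitiveRoot ω 3) (a : K) : algebraMap K F a + 1 + ω ≠ 0 :=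
  pow_card_algebraMap_sub hq hω a ▸
    pow_ne_zero _ (algebraMap_sub_ne_zero_of_isPrimitiveRoot_three hq hω a)

/-- The numerator is the Frobenius conjugate of the denominator, so the value has norm one. -/
def circleParam (K : Type*) [Field K] [Algebra K F] (ω : F) (a : K) : F :=
  -(algebraMap K F a + 1 + ω) / (algebraMap K F a - ω)

theorem one_add_two_mul_ne_zero_of_isPrimitiveRoot_three (hq : Fintype.card K % 3 = 2)
    (hω : IsPrimitiveRoot ω 3) : 1 + 2 * ω ≠ 0 := by
  intro h
  apply algebraMap_ne_of_isPrimitiveRoot_three hq hω (-2)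
  rw [map_neg, map_ofNat]
  linear_combination ω * h - 2 * hω.sq_add_self_add_one

theorem circleParam_injective (hq : Fintype.card K % 3 = 2) (hω : IsPrimitiveRoot ω 3) :
    Function.Injective (circleParam K ω) := by
  intro a b h
  rw [circleParam, circleParam, div_eq_div_iff
    (algebraMap_sub_ne_zero_of_isPrimitiveRoot_three hq hω a)
    (algebraMap_sub_ne_zero_of_isPrimitiveRoot_three hq hω b), neg_mul, neg_mul, neg_inj] at h
  have h' : (algebraMap K F b - algebraMap K F a) * (1 + 2 * ω) = 0 := by linear_combination h
  rcases mul_eq_zero.mp h' with h' | h'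
  · exact (algebraMap K F).injective (sub_eq_zero.mp h').symm
  · exact absurd h' (one_add_two_mul_ne_zero_of_isPrimitiveRoot_three hq hω)

theorem circleParam_ne_neg_one (hq : Fintype.card K % 3 = 2) (hω : IsPrimitiveRoot ω 3) (a : K) :
    circleParam K ω a ≠ -1 := by
  rw [circleParam, ne_eq, div_eq_iff (algebraMap_sub_ne_zero_of_isPrimitiveRoot_three hq hω a),
    neg_mul, one_mul, neg_inj]
  intro h
  exact one_add_two_mul_ne_zero_of_isPrimitiveRoot_three hq hω (by linear_combination h)

theorem circleParam_pow_card [Fintype F] (hF : Fintype.card F = Fintype.card K ^ 2)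
    (hq : Fintype.card K % 3 = 2) (hω : IsPrimitiveRoot ω 3) (a : K) :
    circleParam K ω a ^ Fintype.card K =
      -(algebraMap K F a - ω) / (algebraMap K F a + 1 + ω) := by
  have h := map_div₀ (FiniteField.frobeniusAlgHom K F) (-(algebraMap K F a + 1 + ω))
    (algebraMap K F a - ω)
  simp only [map_neg, FiniteField.frobeniusAlgHom_apply] at h
  rw [circleParam, h, pow_card_algebraMap_sub hq hω, ← pow_card_algebraMap_sub hq hω,
    pow_pow_of_card_eq_sq hF]

theorem circleParam_pow_card_add_one [Fintype F] (hF : Fintype.card F = Fintype.card K ^ 2)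
    (hq : Fintype.card K % 3 = 2) (hω : IsPrimitiveRoot ω 3) (a : K) :
    circleParam K ω a ^ (Fintype.card K + 1) = 1 := by
  have hP := algebraMap_sub_ne_zero_of_isPrimitiveRoot_three hq hω a
  have hQ := algebraMap_add_one_add_ne_zero_of_isPrimitiveRoot_three hq hω a
  rw [pow_succ, circleParam_pow_card hF hq hω, circleParam]
  field_simp

theorem image_circleParam [Fintype F] [DecidableEq F] (hF : Fintype.card F = Fintype.card K ^ 2)
    (hq : Fintype.card K % 3 = 2) (hω : IsPrimitiveRoot ω 3) :
    univ.image (circleParam K ω) =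
      (nthRootsFinset (Fintype.card K + 1) (1 : F)).erase (-1) := by
  have hpos := Nat.succ_pos (Fintype.card K)
  have hneg : (-1 : F) ∈ nthRootsFinset (Fintype.card K + 1) (1 : F) := by
    rw [Polynomial.mem_nthRootsFinset hpos, pow_succ, ← map_one (algebraMap K F), ← map_neg,
      ← map_pow, FiniteField.pow_card, map_neg, map_one, neg_one_mul, neg_neg]
  refine eq_of_subset_of_card_le (fun w hw => ?_) ?_
  · obtain ⟨a, -, rfl⟩ := mem_image.mp hw
    exact mem_erase.mpr ⟨circleParam_ne_neg_one hq hω a,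
      (Polynomial.mem_nthRootsFinset hpos 1).mpr (circleParam_pow_card_add_one hF hq hω a)⟩
  · rw [card_image_of_injective _ (circleParam_injective hq hω), card_univ,
      card_erase_of_mem hneg]
    exact Nat.sub_le_of_le_add (card_nthRootsFinset_le _ _)

theorem trace_circleParam [Fintype F] (hF : Fintype.card F = Fintype.card K ^ 2)
    (hq : Fintype.card K % 3 = 2) (hω : IsPrimitiveRoot ω 3) (a : K) :
    Algebra.trace K F (circleParam K ω a) = -2 + 3 * (a ^ 2 + a + 1)⁻¹ := by
  have hP := algebraMap_sub_ne_zero_of_isPrimitiveRoot_three hq hω a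
  have hQ := algebraMap_add_one_add_ne_zero_of_isPrimitiveRoot_three hq hω a
  apply (algebraMap K F).injective
  rw [algebraMap_trace_eq_add_pow_card hF, circleParam_pow_card hF hq hω, map_add, map_mul,
    map_inv₀, algebraMap_sq_add_self_add_one hω, map_neg, map_ofNat, map_ofNat, circleParam]
  field_simp
  linear_combination (-4 : F) * hω.sq_add_self_add_one

theorem trace_neg_sq_circleParam [Fintype F] (hF : Fintype.card F = Fintype.card K ^ 2)
    (hq : Fintype.card K % 3 = 2) (hω : IsPrimitiveRoot ω 3) (a : K) :
    Algebra.trace K F (-circleParam K ω a ^ 2) =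
      -2 + 3 * ((2 * a + 1) * (a ^ 2 + a + 1)⁻¹) ^ 2 := by
  have hP := algebraMap_sub_ne_zero_of_isPrimitiveRoot_three hq hω a
  have hQ := algebraMap_add_one_add_ne_zero_of_isPrimitiveRoot_three hq hω a
  have hN : a ^ 2 + a + 1 ≠ 0 := fun h =>
    mul_ne_zero hP hQ (by rw [← algebraMap_sq_add_self_add_one hω, h, map_zero])
  rw [map_neg, trace_sq_of_pow_card_add_one_eq_one hF (circleParam_pow_card_add_one hF hq hω a),
    trace_circleParam hF hq hω, mul_pow, show (2 * a + 1) ^ 2 = 4 * (a ^ 2 + a + 1) - 3 by ring]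
  generalize a ^ 2 + a + 1 = N at hN
  field_simp
  ring

theorem sum_addChar_sub_sum_addChar [Fintype F] [DecidableEq K] {R : Type*} [CommRing R]
    (hF : Fintype.card F = Fintype.card K ^ 2) (hq : Fintype.card K % 3 = 2) {u : F}
    (hu : IsPrimitiveRoot u (Fintype.card K + 1)) (ψ : AddChar K R) :
    ψ (-2) * ∑ a ∈ univ.filter (· ≠ 0), ψ (3 * (a ^ 2 + a + 1)⁻¹) -
        ψ (-2) * ∑ a ∈ univ.filter (· ≠ 0), ψ (3 * ((2 * a + 1) * (a ^ 2 + a + 1)⁻¹) ^ 2) =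
      ∑ j ∈ range (Fintype.card K + 1),
        (ψ (Algebra.trace K F (u ^ j)) - ψ (Algebra.trace K F (-(u ^ j) ^ 2))) := by
  classical
  obtain ⟨ω, hω⟩ := exists_isPrimitiveRoot_three hF hq
  set D : F → R := fun w => ψ (Algebra.trace K F w) - ψ (Algebra.trace K F (-w ^ 2))
  have hD0 : D (circleParam K ω 0) = 0 := by
    simp only [D]
    rw [trace_circleParam hF hq hω, trace_neg_sq_circleParam hF hq hω]
    norm_num
  have hD1 : D (-1) = 0 := by simp [D]
  calc _ = ∑ a ∈ univ.erase 0, D (circleParam K ω a) := by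
        rw [mul_sum, mul_sum, ← sum_sub_distrib, filter_ne']
        refine sum_congr rfl fun a _ => ?_
        rw [← AddChar.map_add_eq_mul, ← AddChar.map_add_eq_mul, ← trace_circleParam hF hq hω,
          ← trace_neg_sq_circleParam hF hq hω]
    _ = ∑ a, D (circleParam K ω a) := sum_erase _ hD0
    _ = ∑ w ∈ (nthRootsFinset (Fintype.card K + 1) (1 : F)).erase (-1), D w := by
        rw [← image_circleParam hF hq hω, sum_image (circleParam_injective hq hω).injOn]
    _ = ∑ w ∈ nthRootsFinset (Fintype.card K + 1) (1 : F), D w := sum_erase _ hD1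
    _ = _ := hu.sum_nthRootsFinset_one D

end QuadraticExtension

/-- Equation (s): the value of `s(1)` as an explicit character sum, with a sign
depending on `r mod 4`. -/
theorem stmt9 (r : ℕ) [NeZero r] (hr : r.Prime) (hodd : Odd r) (h3 : r % 3 = 2)
    (F : Type*) [Field F] [Fintype F] [Algebra (ZMod r) F]
    (hcard : Fintype.card F = r ^ 2)
    (u : F) (hu : orderOf u = r + 1) :
    (r % 4 = 1 → sSum r u 1 =
      zmodExp r (-2) * (∑ a ∈ Finset.univ.filter (fun a : ZMod r => a ≠ 0),
          zmodExp r (3 * (a ^ 2 + a + 1)⁻¹)) -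
        zmodExp r (-2) * (∑ a ∈ Finset.univ.filter (fun a : ZMod r => a ≠ 0),
          zmodExp r (3 * ((2 * a + 1) * (a ^ 2 + a + 1)⁻¹) ^ 2))) ∧
    (r % 4 = 3 → sSum r u 1 =
      -(zmodExp r (-2) * (∑ a ∈ Finset.univ.filter (fun a : ZMod r => a ≠ 0),
          zmodExp r (3 * (a ^ 2 + a + 1)⁻¹)) -
        zmodExp r (-2) * (∑ a ∈ Finset.univ.filter (fun a : ZMod r => a ≠ 0),
          zmodExp r (3 * ((2 * a + 1) * (a ^ 2 + a + 1)⁻¹) ^ 2)))) := by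
  have : Fact r.Prime := ⟨hr⟩
  have hu' : IsPrimitiveRoot u (r + 1) := hu ▸ IsPrimitiveRoot.orderOf u
  have key := sum_addChar_sub_sum_addChar (K := ZMod r) (F := F) (by rwa [ZMod.card])
    (by rwa [ZMod.card]) (by rwa [ZMod.card]) ZMod.stdAddChar
  simp only [← zmodExp_eq_stdAddChar, ZMod.card] at key
  obtain ⟨n, hn⟩ := hodd.add_one.two_dvd
  rw [hn] at hu' key
  set g : ℕ → ℂ := fun j => zmodExp r (Algebra.trace (ZMod r) F (u ^ j))
  have hg : Function.Periodic g (2 * n) := fun j => by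
    simp only [g, pow_add, hu'.pow_eq_one, mul_one]
  have hneg : u ^ n = -1 := by
    have h := hu'.pow_of_dvd (by omega) (dvd_mul_left n 2)
    rw [Nat.mul_div_cancel _ (by omega)] at h
    exact h.eq_neg_one_of_two_right
  have hsq (j : ℕ) : zmodExp r (Algebra.trace (ZMod r) F (-(u ^ j) ^ 2)) = g (2 * j + n) := by
    simp only [g, pow_add, hneg, pow_mul', mul_neg_one]
  have hs : sSum r u 1 = ∑ j ∈ range (2 * n), (-1) ^ j * g j := by
    simp only [sSum, one_mul, hn, g]
  rw [sum_sub_distrib, sum_congr rfl fun j _ => hsq j, hg.sum_range_two_mul_add,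
    ← hs] at key
  refine ⟨fun h4 => ?_, fun h4 => ?_⟩
  · rw [(Nat.odd_iff.mpr (by omega) : Odd n).neg_one_pow] at key
    linear_combination -key
  · rw [(Nat.even_iff.mpr (by omega) : Even n).neg_one_pow] at key
    linear_combination key
end

section
/- Equation (ab) of the paper: let i, j ∈ ZMod r with i ≠ 0, j ≠ i and j ≠ −i. Then ∑_{a ∈ ZMod r} χ( 2(j−i) + 3·i·(a²+a+1)⁻¹ ) = ∑_{a ∈ ZMod r} χ( 2(j−i) + 3·i·((2a+1)·(a²+a+1)⁻¹)² ), where all arithmetic is in ZMod r (a² + a + 1 ≠ 0 for all a since r ≡ 2 (mod 3)). -/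
open Finset

open scoped Classical

/-! With `u a = a ^ 2 + a + 1`, the map `f a = (a ^ 2 - 1) / (2 * a + 1)` satisfies
`u (f a) = (u a / (2 * a + 1)) ^ 2`, so off the pole `a = -1/2` the right summand at `a` is the
left summand `L b = χ (c + d * (u b)⁻¹)` at `b = f a` (here `c = 2 (j - i)`, `d = 3 i`).
The fibre of `f` over `b` is `{b + x | x ^ 2 = u b}`, of size `χ (u b) + 1`, and
`χ (u b) * L b = χ (c * u b + d)`. Hence the right sum is `χ c + ∑ L + ∑_b χ (c * u b + d)`,
and the last sum, of `χ` along a quadratic with discriminant `-c (3 c + 4 d) ≠ 0`, is `-χ c`. -/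

/-- The quadratic character of `ZMod r` with values in `ℤ`:
`χ(m) = 1` if `m` is a nonzero square, `−1` if `m` is a nonsquare, `χ(0) = 0`. -/
noncomputable def chi (r : ℕ) (m : ZMod r) : ℤ :=
  if m = 0 then 0 else if IsSquare m then 1 else -1

namespace FiniteField

variable {F : Type*} [Field F] [Fintype F]

theorem three_ne_zero_of_card_mod_three (hF : Fintype.card F % 3 = 2) : (3 : F) ≠ 0 := by
  intro h3
  have hq : ((Fintype.card F : ℕ) : F) = 0 := cast_card_eq_zero F
  rw [← Nat.div_add_mod (Fintype.card F) 3, hF] at hq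
  push_cast at hq
  exact one_ne_zero (α := F) <| by
    linear_combination (1 + ((Fintype.card F / 3 : ℕ) : F)) * h3 - hq

theorem sq_add_add_one_ne_zero (hF : Fintype.card F % 3 = 2) (a : F) : a ^ 2 + a + 1 ≠ 0 := by
  intro hu
  have hcube : a ^ 3 = 1 := by linear_combination (a - 1) * hu
  have ha0 : a ≠ 0 := by rintro rfl; simp at hcube
  -- `a ^ q = a` and `q ≡ 2 [MOD 3]`
  have hsq : a ^ 2 = a := by
    have := pow_card a
    rwa [← Nat.div_add_mod (Fintype.card F) 3, hF, pow_add, pow_mul, hcube, one_pow,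
      one_mul] at this
  have ha1 : a = 1 := mul_left_cancel₀ ha0 (by rw [← sq, hsq, mul_one])
  exact three_ne_zero_of_card_mod_three hF (by rw [ha1] at hu; linear_combination hu)

end FiniteField

section QuadraticChar

variable {F : Type*} [Field F] [Fintype F] [DecidableEq F]

theorem quadraticChar_inv (a : F) : quadraticChar F a⁻¹ = quadraticChar F a := by
  rw [← MulChar.inv_apply', (quadraticChar_isQuadratic F).inv]

theorem card_filter_sq_eq (hF : ringChar F ≠ 2) (t : F) :
    (#{x | x ^ 2 = t} : ℤ) = quadraticChar F t + 1 := by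
  rw [← quadraticChar_card_sqrts hF t, Set.toFinset_ofPred]

theorem sum_comp_sq (hF : ringChar F ≠ 2) (G : F → ℤ) :
    ∑ x, G (x ^ 2) = ∑ t, (quadraticChar F t + 1) * G t := by
  rw [← sum_fiberwise' univ (· ^ 2) G]
  refine sum_congr rfl fun t _ => ?_
  rw [sum_const, nsmul_eq_mul, card_filter_sq_eq hF]

theorem quadraticChar_sum_sq_sub_self (hF : ringChar F ≠ 2) :
    ∑ x : F, quadraticChar F (x ^ 2 - x) = -1 := by
  have hJ := jacobiSum_nontrivial_inv (quadraticChar_ne_one hF)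
  rw [(quadraticChar_isQuadratic F).inv, jacobiSum] at hJ
  have h : ∀ x : F, quadraticChar F x * quadraticChar F (1 - x) =
      quadraticChar F (-1) * quadraticChar F (x ^ 2 - x) := fun x => by
    rw [← map_mul, ← map_mul]; ring_nf
  simp only [h, ← mul_sum] at hJ
  have h1 : quadraticChar F (-1) ≠ 0 :=
    quadraticChar_eq_zero_iff.not.mpr (neg_ne_zero.mpr one_ne_zero)
  exact mul_left_cancel₀ h1 (by rw [hJ]; ring)

theorem quadraticChar_sum_sq_sub (hF : ringChar F ≠ 2) {e : F} (he : e ≠ 0) :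
    ∑ x : F, quadraticChar F (x ^ 2 - e) = -1 := by
  rw [sum_comp_sq hF (fun t => quadraticChar F (t - e))]
  have hshift : ∑ t : F, quadraticChar F (t - e) = 0 := by
    rw [← quadraticChar_sum_zero hF]
    exact Fintype.sum_equiv (Equiv.subRight e) _ _ fun _ => rfl
  have hscale : ∑ t : F, quadraticChar F t * quadraticChar F (t - e) =
      ∑ s : F, quadraticChar F (s ^ 2 - s) := by
    refine Fintype.sum_equiv (Equiv.mulLeft₀ e⁻¹ (inv_ne_zero he)) _ _ fun t => ?_
    have hfac : t * (t - e) = e ^ 2 * ((e⁻¹ * t) ^ 2 - e⁻¹ * t) := by field_simp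
    rw [← map_mul, Equiv.mulLeft₀_apply, hfac, map_mul, quadraticChar_sq_one' he, one_mul]
  simp only [add_mul, one_mul, sum_add_distrib, hshift, add_zero, hscale,
    quadraticChar_sum_sq_sub_self hF]

theorem quadraticChar_sum_quadratic (hF : ringChar F ≠ 2) {a b c : F} (ha : a ≠ 0)
    (hdisc : b ^ 2 - 4 * a * c ≠ 0) :
    ∑ x : F, quadraticChar F (a * x ^ 2 + b * x + c) = -quadraticChar F a := by
  have h2 : (2 : F) ≠ 0 := Ring.two_ne_zero hF
  have hsq : ∀ x : F, quadraticChar F (a * x ^ 2 + b * x + c) =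
      quadraticChar F a * quadraticChar F ((2 * a * x + b) ^ 2 - (b ^ 2 - 4 * a * c)) := by
    intro x
    have hfac : (2 * a * x + b) ^ 2 - (b ^ 2 - 4 * a * c) =
        (2 * a) ^ 2 * (a⁻¹ * (a * x ^ 2 + b * x + c)) := by field_simp; ring
    rw [hfac, map_mul, map_mul, quadraticChar_sq_one' (mul_ne_zero h2 ha), quadraticChar_inv,
      one_mul, ← mul_assoc, ← sq, quadraticChar_sq_one ha, one_mul]
  have hshift : ∑ x : F, quadraticChar F ((2 * a * x + b) ^ 2 - (b ^ 2 - 4 * a * c)) =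
      ∑ y : F, quadraticChar F (y ^ 2 - (b ^ 2 - 4 * a * c)) :=
    Fintype.sum_equiv ((Equiv.mulLeft₀ (2 * a) (mul_ne_zero h2 ha)).trans (Equiv.addRight b))
      _ _ fun _ => rfl
  rw [sum_congr rfl fun x _ => hsq x, ← mul_sum, hshift, quadraticChar_sum_sq_sub hF hdisc,
    mul_neg_one]

end QuadraticChar

section TwoToOneMap

variable {F : Type*} [Field F]

theorem sq_sub_one_div_eq_iff {a b : F} (ha : 2 * a + 1 ≠ 0) :
    (a ^ 2 - 1) / (2 * a + 1) = b ↔ (a - b) ^ 2 = b ^ 2 + b + 1 := by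
  rw [div_eq_iff ha]
  constructor <;> intro h <;> linear_combination h

theorem sq_add_add_one_of_sq_sub_one_div {a : F} (ha : 2 * a + 1 ≠ 0) :
    ((a ^ 2 - 1) / (2 * a + 1)) ^ 2 + (a ^ 2 - 1) / (2 * a + 1) + 1 =
      ((a ^ 2 + a + 1) / (2 * a + 1)) ^ 2 := by
  generalize hv : 2 * a + 1 = v at ha ⊢
  field_simp
  rw [← hv]
  ring

theorem two_mul_add_one_ne_zero (h2 : (2 : F) ≠ 0) {a : F} (ha : a ≠ -2⁻¹) :
    2 * a + 1 ≠ 0 := by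
  intro h
  apply ha
  field_simp
  linear_combination h

variable [Fintype F] [DecidableEq F]

theorem card_filter_sq_sub_one_div_eq (h2 : (2 : F) ≠ 0) (h3 : (3 : F) ≠ 0) (b : F) :
    #{a ∈ univ.erase (-2⁻¹) | (a ^ 2 - 1) / (2 * a + 1) = b} =
      #{x : F | x ^ 2 = b ^ 2 + b + 1} := by
  refine card_bij' (fun a _ => a - b) (fun x _ => x + b) ?_ ?_ (fun _ _ => by ring)
    (fun _ _ => by ring)
  · intro a ha
    simp only [mem_filter, mem_erase, mem_univ, and_true, true_and] at ha ⊢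
    exact (sq_sub_one_div_eq_iff (two_mul_add_one_ne_zero h2 ha.1)).mp ha.2
  · intro x hx
    simp only [mem_filter, mem_univ, true_and] at hx
    have hxb : x + b ≠ -2⁻¹ := by
      -- otherwise `x ^ 2 = b ^ 2 + b + 1` reads `1 / 4 = 1`
      intro hxb
      apply h3
      linear_combination -4 * hx + 4 * (x - b - 2⁻¹) * hxb +
        (4 * b + 2 * 2⁻¹ + 1) * mul_inv_cancel₀ h2
    simp only [mem_filter, mem_erase, mem_univ, and_true]
    refine ⟨hxb, (sq_sub_one_div_eq_iff (two_mul_add_one_ne_zero h2 hxb)).mpr ?_⟩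
    simpa using hx

theorem sum_erase_comp_sq_sub_one_div (hF : ringChar F ≠ 2) (h3 : (3 : F) ≠ 0) (G : F → ℤ) :
    ∑ a ∈ univ.erase (-2⁻¹), G ((a ^ 2 - 1) / (2 * a + 1)) =
      ∑ b, (quadraticChar F (b ^ 2 + b + 1) + 1) * G b := by
  rw [← sum_fiberwise' (univ.erase (-2⁻¹)) (fun a => (a ^ 2 - 1) / (2 * a + 1)) G]
  refine sum_congr rfl fun b _ => ?_
  rw [sum_const, nsmul_eq_mul, card_filter_sq_sub_one_div_eq (Ring.two_ne_zero hF) h3,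
    card_filter_sq_eq hF]

theorem quadraticChar_sum_add_mul_inv_eq (hF : ringChar F ≠ 2)
    (hu : ∀ a : F, a ^ 2 + a + 1 ≠ 0) {c d : F} (hc : c ≠ 0) (hcd : 3 * c + 4 * d ≠ 0) :
    ∑ a, quadraticChar F (c + d * (a ^ 2 + a + 1)⁻¹) =
      ∑ a, quadraticChar F (c + d * ((2 * a + 1) * (a ^ 2 + a + 1)⁻¹) ^ 2) := by
  set L : F → ℤ := fun b => quadraticChar F (c + d * (b ^ 2 + b + 1)⁻¹)
  have h2 : (2 : F) ≠ 0 := Ring.two_ne_zero hF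
  have h3 : (3 : F) ≠ 0 := by convert hu 1 using 1; norm_num
  have hpole :
      quadraticChar F (c + d * ((2 * -2⁻¹ + 1) * ((-2⁻¹) ^ 2 + -2⁻¹ + 1)⁻¹) ^ 2) =
        quadraticChar F c := by
    rw [mul_neg, mul_inv_cancel₀ h2]; simp
  have hpullback : ∀ a ∈ univ.erase (-2⁻¹ : F),
      quadraticChar F (c + d * ((2 * a + 1) * (a ^ 2 + a + 1)⁻¹) ^ 2) =
        L ((a ^ 2 - 1) / (2 * a + 1)) := by
    intro a ha
    have hv := two_mul_add_one_ne_zero h2 (ne_of_mem_erase ha)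
    dsimp only [L]
    rw [sq_add_add_one_of_sq_sub_one_div hv, ← inv_pow, inv_div, div_eq_mul_inv]
  have hweight : ∀ b : F, quadraticChar F (b ^ 2 + b + 1) * L b =
      quadraticChar F (c * b ^ 2 + c * b + (c + d)) := by
    intro b
    simp only [L, ← map_mul]
    congr 1
    linear_combination d * mul_inv_cancel₀ (hu b)
  have hdisc : c ^ 2 - 4 * c * (c + d) ≠ 0 := by
    have : c ^ 2 - 4 * c * (c + d) = -(c * (3 * c + 4 * d)) := by ring
    rw [this, neg_ne_zero]
    exact mul_ne_zero hc hcd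
  symm
  calc ∑ a, quadraticChar F (c + d * ((2 * a + 1) * (a ^ 2 + a + 1)⁻¹) ^ 2)
      = quadraticChar F c + ∑ a ∈ univ.erase (-2⁻¹), L ((a ^ 2 - 1) / (2 * a + 1)) := by
        rw [← add_sum_erase _ _ (mem_univ (-2⁻¹)), hpole, sum_congr rfl hpullback]
    _ = quadraticChar F c + ∑ b, (quadraticChar F (b ^ 2 + b + 1) + 1) * L b := by
        rw [sum_erase_comp_sq_sub_one_div hF h3]
    _ = quadraticChar F c + ∑ b, quadraticChar F (c * b ^ 2 + c * b + (c + d)) + ∑ b, L b := by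
        simp only [add_mul, one_mul, hweight, sum_add_distrib]
        ring
    _ = ∑ b, L b := by
        rw [quadraticChar_sum_quadratic hF hc hdisc]
        ring

end TwoToOneMap

theorem chi_eq_quadraticChar (p : ℕ) [Fact p.Prime] (m : ZMod p) :
    chi p m = quadraticChar (ZMod p) m := by
  simp only [chi, quadraticChar_apply, quadraticCharFun]
  congr

theorem stmt12_general (r : ℕ) [NeZero r] (hr : r.Prime) (hodd : Odd r) (h3 : r % 3 = 2)
    (i j : ZMod r) (hji : j ≠ i) (hji' : j ≠ -i) :
    ∑ a : ZMod r, chi r (2 * (j - i) + 3 * i * (a ^ 2 + a + 1)⁻¹) =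
      ∑ a : ZMod r, chi r (2 * (j - i) + 3 * i * ((2 * a + 1) * (a ^ 2 + a + 1)⁻¹) ^ 2) := by
  have : Fact r.Prime := ⟨hr⟩
  have hcard : Fintype.card (ZMod r) % 3 = 2 := by rwa [ZMod.card]
  have hF : ringChar (ZMod r) ≠ 2 := by
    rw [ZMod.ringChar_zmod_n]
    rintro rfl
    exact Nat.not_odd_iff_even.mpr even_two hodd
  have h6 : (6 : ZMod r) ≠ 0 := by
    have : (6 : ZMod r) = 2 * 3 := by norm_num
    rw [this]
    exact mul_ne_zero (Ring.two_ne_zero hF) (FiniteField.three_ne_zero_of_card_mod_three hcard)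
  simp only [chi_eq_quadraticChar]
  refine quadraticChar_sum_add_mul_inv_eq hF (FiniteField.sq_add_add_one_ne_zero hcard)
    (mul_ne_zero (Ring.two_ne_zero hF) (sub_ne_zero.mpr hji)) ?_
  have : 3 * (2 * (j - i)) + 4 * (3 * i) = 6 * (j - -i) := by ring
  rw [this]
  exact mul_ne_zero h6 (sub_ne_zero.mpr hji')

/-- Equation (ab): for `i ≠ 0`, `j ≠ ±i`,
`∑_a χ(2(j−i) + 3i(a²+a+1)⁻¹) = ∑_a χ(2(j−i) + 3i((2a+1)(a²+a+1)⁻¹)²)`. -/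
theorem stmt12 (r : ℕ) [NeZero r] (hr : r.Prime) (hodd : Odd r) (h3 : r % 3 = 2)
    (i j : ZMod r) (hi : i ≠ 0) (hji : j ≠ i) (hji' : j ≠ -i) :
    ∑ a : ZMod r, chi r (2 * (j - i) + 3 * i * (a ^ 2 + a + 1)⁻¹) =
      ∑ a : ZMod r, chi r (2 * (j - i) + 3 * i * ((2 * a + 1) * (a ^ 2 + a + 1)⁻¹) ^ 2) :=
  stmt12_general r hr hodd h3 i j hji hji'
end
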